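/- For n ≥ 0 and x > 0, y ≥ 0, Σ_{s=0}^{n} C(n,s)(x+s)^{s−1}(y+n−s)^{n−s+1} = x^{−1} Σ_{s=0}^{n} C(n,s)(x+y+n)^{s}(y+n−s)(n−s)!. -/

import Mathlib

/-!
Write `z = x + y + n` and `A_n(p, q)` for the sum of the statement. Since `y + n - s = z - (x + s)`,
`A_n(-1, 1) = z A_n(-1, 0) - A_n(0, 0)`. Abel's identity `A_n(-1, 0) = x⁻¹ z ^ n` and
`A_n(0, 0) = n! ∑_{s ≤ n} z ^ s / s!` are proved together by induction on `n`, from Pascal's rule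
`A_{n+1}(x, y; p, q) = A_n(x, y + 1; p, q + 1) + A_n(x + 1, y; p + 1, q)` and from
`A_{n+1}(x, y; p + 1, q) = x A_{n+1}(x, y; p, q) + (n + 1) A_n(x + 1, y; p + 1, q)`.
On the right-hand side, `y + n - s = (z - s) - x` and `∑ C(n, s) z ^ s (z - s) (n - s)!`
telescopes to `z ^ (n + 1)`.
-/

open Finset

section

variable {K : Type*} [Field K]

lemma sum_range_choose_succ_mul_self_mul (m : ℕ) (f : ℕ → K) :
    ∑ s ∈ range (m + 2), ((m + 1).choose s : K) * s * f s =
      (m + 1) * ∑ s ∈ range (m + 1), (m.choose s : K) * f (s + 1) := by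
  rw [sum_range_succ', mul_sum]
  simp only [Nat.cast_zero, mul_zero, zero_mul, add_zero]
  refine sum_congr rfl fun s _ => ?_
  have h := congrArg (Nat.cast : ℕ → K) (Nat.add_one_mul_choose_eq m s)
  push_cast at h ⊢
  linear_combination f (s + 1) * h.symm

lemma sum_range_choose_succ_mul_factorial (n : ℕ) (f : ℕ → K) :
    ∑ s ∈ range (n + 2), ((n + 1).choose s : K) * f s * (n + 1 - s).factorial =
      (n + 1) * ∑ s ∈ range (n + 1), (n.choose s : K) * f s * (n - s).factorial + f (n + 1) := by
  rw [sum_range_succ, mul_sum]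
  simp only [Nat.choose_self, Nat.sub_self, Nat.factorial_zero, Nat.cast_one, one_mul, mul_one]
  congr 1
  refine sum_congr rfl fun s hs => ?_
  have hsn : n + 1 - s = n - s + 1 := by grind
  have key :
      (n + 1).choose s * (n + 1 - s).factorial = (n + 1) * (n.choose s * (n - s).factorial) := by
    rw [hsn, Nat.factorial_succ, ← hsn, ← mul_assoc, ← Nat.choose_mul_succ_eq]
    ring
  have h := congrArg (Nat.cast : ℕ → K) key
  push_cast at h
  linear_combination f s * h

/-- `n! * ∑_{s ≤ n} z ^ s / s!`, since `n.choose s * (n - s)! = n! / s!`. -/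
def factorialMulExpPartialSum (n : ℕ) (z : K) : K :=
  ∑ s ∈ range (n + 1), (n.choose s : K) * z ^ s * (n - s).factorial

lemma factorialMulExpPartialSum_succ (n : ℕ) (z : K) :
    factorialMulExpPartialSum (n + 1) z = (n + 1) * factorialMulExpPartialSum n z + z ^ (n + 1) :=
  sum_range_choose_succ_mul_factorial n (z ^ ·)

lemma sum_choose_mul_pow_mul_sub_mul_factorial (n : ℕ) (z : K) :
    ∑ s ∈ range (n + 1), (n.choose s : K) * z ^ s * (z - s) * (n - s).factorial = z ^ (n + 1) := by
  induction n with
  | zero => simp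
  | succ n ih =>
    have h := sum_range_choose_succ_mul_factorial n (fun s => z ^ s * (z - s))
    simp only [← mul_assoc] at h
    rw [show n + 1 + 1 = n + 2 from rfl, h, ih]
    push_cast
    ring

/-- Riordan's `A_n(x, y; p, q)`. -/
def abelSum (n : ℕ) (x y : K) (p : ℤ) (q : ℕ) : K :=
  ∑ s ∈ range (n + 1), (n.choose s : K) * (x + s) ^ ((s : ℤ) + p) * (y + n - s) ^ (n - s + q)

lemma abelSum_succ (m : ℕ) (x y : K) (p : ℤ) (q : ℕ) :
    abelSum (m + 1) x y p q = abelSum m x (y + 1) p (q + 1) + abelSum m (x + 1) y (p + 1) q := by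
  have h := sum_choose_succ_mul
    (fun s _ => (x + s) ^ ((s : ℤ) + p) * (y + (m + 1 : ℕ) - s) ^ (m + 1 - s + q)) m
  simp only [abelSum, mul_assoc] at h ⊢
  rw [h]
  congr 1 <;> refine sum_congr rfl fun s hs => ?_
  · have hsm : m + 1 - s + q = m - s + (q + 1) := by grind
    rw [hsm]; push_cast; ring_nf
  · push_cast; ring_nf

lemma abelSum_exponent_succ_right {n : ℕ} {x : K} (y : K) (p : ℤ) (q : ℕ)
    (hx : ∀ s : ℕ, x + s ≠ 0) :
    abelSum n x y p (q + 1) = (x + y + n) * abelSum n x y p q - abelSum n x y (p + 1) q := by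
  simp only [abelSum, mul_sum, ← sum_sub_distrib]
  refine sum_congr rfl fun s _ => ?_
  rw [← add_assoc, ← add_assoc, zpow_add_one₀ (hx s), pow_succ]
  ring

lemma abelSum_exponent_succ_left (m : ℕ) {x : K} (y : K) (p : ℤ) (q : ℕ)
    (hx : ∀ s : ℕ, x + s ≠ 0) :
    abelSum (m + 1) x y (p + 1) q =
      x * abelSum (m + 1) x y p q + (m + 1) * abelSum m (x + 1) y (p + 1) q := by
  have h := sum_range_choose_succ_mul_self_mul m
    (fun s => (x + s) ^ ((s : ℤ) + p) * (y + (m + 1 : ℕ) - s) ^ (m + 1 - s + q))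
  have split (s : ℕ) : ((m + 1).choose s : K) * (x + s) ^ ((s : ℤ) + (p + 1)) *
      (y + (m + 1 : ℕ) - s) ^ (m + 1 - s + q) =
        x * (((m + 1).choose s : K) * (x + s) ^ ((s : ℤ) + p) *
          (y + (m + 1 : ℕ) - s) ^ (m + 1 - s + q)) +
        ((m + 1).choose s : K) * s *
          ((x + s) ^ ((s : ℤ) + p) * (y + (m + 1 : ℕ) - s) ^ (m + 1 - s + q)) := by
    rw [← add_assoc, zpow_add_one₀ (hx s)]
    ring
  rw [abelSum, sum_congr rfl fun s _ => split s, sum_add_distrib, ← mul_sum, h]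
  congr 2
  refine sum_congr rfl fun s _ => ?_
  push_cast
  ring_nf

lemma abelSum_neg_one_zero_and_abelSum_zero_zero (n : ℕ) {x : K} (y : K)
    (hx : ∀ s : ℕ, x + s ≠ 0) :
    abelSum n x y (-1) 0 = x⁻¹ * (x + y + n) ^ n ∧
      abelSum n x y 0 0 = factorialMulExpPartialSum n (x + y + n) := by
  induction n generalizing x y with
  | zero => simp [abelSum, factorialMulExpPartialSum]
  | succ m ih =>
    have hx1 (s : ℕ) : x + 1 + s ≠ 0 := by
      convert hx (s + 1) using 1
      push_cast
      ring
    obtain ⟨hP, hQ⟩ := ih (y + 1) hx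
    have hQ1 := (ih y hx1).2
    have hz : x + (y + 1) + m = x + y + (m + 1 : ℕ) := by push_cast; ring
    have hz1 : x + 1 + y + m = x + y + (m + 1 : ℕ) := by push_cast; ring
    rw [hz] at hP hQ
    rw [hz1] at hQ1
    have hP' : abelSum (m + 1) x y (-1) 0 = x⁻¹ * (x + y + (m + 1 : ℕ)) ^ (m + 1) := by
      rw [abelSum_succ, abelSum_exponent_succ_right _ _ _ hx, neg_add_cancel, hP, hQ, hQ1, hz]
      ring
    refine ⟨hP', ?_⟩
    have h := abelSum_exponent_succ_left m y (-1) 0 hx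
    rw [neg_add_cancel] at h
    rw [h, hP', hQ1, factorialMulExpPartialSum_succ, mul_inv_cancel_left₀ (by simpa using hx 0)]
    ring

end

theorem abel_neg_one_one_general (n : ℕ) (x y : ℝ) (hx : 0 < x) :
    ∑ s ∈ Finset.range (n + 1),
        (n.choose s : ℝ) * (x + s) ^ ((s : ℤ) - 1) * (y + n - s) ^ (n - s + 1) =
      x⁻¹ * ∑ s ∈ Finset.range (n + 1),
        (n.choose s : ℝ) * (x + y + n) ^ s * (y + n - s) * ((n - s).factorial : ℝ) := by
  have hxs (s : ℕ) : x + s ≠ 0 := by positivity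
  obtain ⟨hP, hQ⟩ := abelSum_neg_one_zero_and_abelSum_zero_zero n y hxs
  have hlhs : ∑ s ∈ range (n + 1),
      (n.choose s : ℝ) * (x + s) ^ ((s : ℤ) - 1) * (y + n - s) ^ (n - s + 1) =
        abelSum n x y (-1) (0 + 1) := rfl
  have hrhs : ∑ s ∈ range (n + 1),
      (n.choose s : ℝ) * (x + y + n) ^ s * (y + n - s) * ((n - s).factorial : ℝ) =
        (x + y + n) ^ (n + 1) - x * factorialMulExpPartialSum n (x + y + n) := by
    rw [← sum_choose_mul_pow_mul_sub_mul_factorial, factorialMulExpPartialSum, mul_sum,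
      ← sum_sub_distrib]
    refine sum_congr rfl fun s _ => ?_
    ring
  rw [hlhs, hrhs, abelSum_exponent_succ_right _ _ _ hxs, neg_add_cancel, hP, hQ]
  field_simp
  ring

/-- Abel's binomial theorem, case `A_n(x, y; -1, 1)`:
`Σ_{s=0}^{n} C(n,s)(x+s)^(s-1)(y+n-s)^(n-s+1)
  = x⁻¹ Σ_{s=0}^{n} C(n,s)(x+y+n)^s (y+n-s)(n-s)!`. -/
theorem abel_neg_one_one (n : ℕ) (x y : ℝ) (hx : 0 < x) (hy : 0 ≤ y) :
    ∑ s ∈ Finset.range (n + 1),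
        (n.choose s : ℝ) * (x + s) ^ ((s : ℤ) - 1) * (y + n - s) ^ (n - s + 1) =
      x⁻¹ * ∑ s ∈ Finset.range (n + 1),
        (n.choose s : ℝ) * (x + y + n) ^ s * (y + n - s) * ((n - s).factorial : ℝ) :=
  abel_neg_one_one_general n x y hx
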